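/- For the closed-loop mixed traffic system matrix Â_S (defined as in the block form [[0, M₁],[α₁ I_n - k_s D_S, M₂ - k_v D_S]]), the spectrum (with multiplicity) of Â_S is the same for any two subsets S, S' ⊆ {1,…,n} with |S| = |S'|. That is, the characteristic polynomial of Â_S depends on S only through its cardinality. -/

import Mathlib

/-! The characteristic polynomial of `fromBlocks 0 B C D` is `det (X • charmatrix D - C * B)`.
For `Â_S`, `C = α₁ I - k_s D_S` is diagonal and `B = M₁`, `D = M₂ - k_v D_S` are cyclic
bidiagonal, so this is the determinant of a cyclic bidiagonal matrix whose `i`-th diagonal and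
subdiagonal entries depend only on whether `i ∈ S`. Expanding along the first row leaves two
triangular minors, so for `n = m + 2` such a determinant is `∏ xᵢ + (-1) ^ (m + 1) * ∏ yᵢ`, and
both products depend on `S` only through `|S|`. For `n ≤ 1`, subsets of equal size coincide. -/

open Matrix

/-- Circulant matrix `M₁` (real version): `-1` on the diagonal, `1` on the
subdiagonal and in the top-right corner. -/
def M1 (n : ℕ) : Matrix (Fin n) (Fin n) ℝ := fun i j =>
  if i = j then -1
  else if (i : ℕ) = (j : ℕ) + 1 then 1
  else if (i : ℕ) = 0 ∧ (j : ℕ) = n - 1 then 1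
  else 0

/-- Circulant matrix `M₂` (real version): `-α₂` on the diagonal, `α₃` on the
subdiagonal and in the top-right corner. -/
def M2 (n : ℕ) (α₂ α₃ : ℝ) : Matrix (Fin n) (Fin n) ℝ := fun i j =>
  if i = j then -α₂
  else if (i : ℕ) = (j : ℕ) + 1 then α₃
  else if (i : ℕ) = 0 ∧ (j : ℕ) = n - 1 then α₃
  else 0

/-- The closed-loop mixed traffic matrix
`Â_S = [[0, M₁], [α₁ I - k_s D_S, M₂ - k_v D_S]]` associated with the AV set `S`,
where `D_S` is the diagonal 0/1 indicator matrix of `S`. -/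
noncomputable def Ahat (n : ℕ) (α₁ α₂ α₃ ks kv : ℝ) (S : Finset (Fin n)) :
    Matrix (Fin n ⊕ Fin n) (Fin n ⊕ Fin n) ℝ :=
  Matrix.fromBlocks 0 (M1 n)
    (α₁ • (1 : Matrix (Fin n) (Fin n) ℝ)
      - ks • Matrix.diagonal (fun i => if i ∈ S then (1 : ℝ) else 0))
    (M2 n α₂ α₃ - kv • Matrix.diagonal (fun i => if i ∈ S then (1 : ℝ) else 0))

open Polynomial

theorem Finset.eq_of_card_eq_of_card_le_one {α : Type*} [Fintype α] (hα : Fintype.card α ≤ 1)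
    {s t : Finset α} (h : s.card = t.card) : s = t := by
  rcases Nat.eq_zero_or_pos s.card with hs | hs
  · rw [Finset.card_eq_zero.1 hs, Finset.card_eq_zero.1 (show t.card = 0 by omega)]
  · rw [s.eq_univ_of_card (le_antisymm s.card_le_univ (by omega)),
      t.eq_univ_of_card (le_antisymm t.card_le_univ (by omega))]

theorem Fintype.prod_ite_mem_const {ι M : Type*} [Fintype ι] [DecidableEq ι] [CommMonoid M]
    (s : Finset ι) (a b : M) :
    (∏ i, if i ∈ s then a else b) = a ^ s.card * b ^ (Fintype.card ι - s.card) := by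
  rw [Finset.prod_ite, Finset.prod_const, Finset.prod_const, Finset.filter_univ_mem,
    Finset.filter_not, Finset.filter_univ_mem, ← Finset.compl_eq_univ_sdiff, Finset.card_compl]

namespace Matrix

variable {R : Type*} [CommRing R] {ι : Type*} [Fintype ι] [DecidableEq ι]

theorem det_fromBlocks_scalar₁₁ [IsDomain R] {t : R} (ht : t ≠ 0) (B C D : Matrix ι ι R) :
    (fromBlocks (scalar ι t) B C D).det = (t • D - C * B).det := by
  have hmul : fromBlocks 1 0 (-C) (scalar ι t) * fromBlocks (scalar ι t) B C D
      = fromBlocks (scalar ι t) B 0 (t • D - C * B) := by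
    simp only [fromBlocks_multiply, scalar_apply, ← smul_one_eq_diagonal, Matrix.one_mul,
      Matrix.zero_mul, add_zero, Matrix.neg_mul, Matrix.mul_smul, Matrix.mul_one, Matrix.smul_mul,
      smul_neg, neg_add_cancel, neg_add_eq_sub]
  have hdet := congrArg det hmul
  rw [det_mul, det_fromBlocks_zero₁₂, det_fromBlocks_zero₂₁, det_one, one_mul] at hdet
  exact mul_left_cancel₀ (by simp [ht]) hdet

theorem charpoly_fromBlocks_zero₁₁ [IsDomain R] (B C D : Matrix ι ι R) :
    (fromBlocks 0 B C D).charpoly =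
      ((X : R[X]) • charmatrix D - C.map Polynomial.C * B.map Polynomial.C).det := by
  rw [charpoly, charmatrix_fromBlocks, charmatrix_zero, det_fromBlocks_scalar₁₁ X_ne_zero,
    Matrix.neg_mul, Matrix.mul_neg, neg_neg]

def cyclicBidiagonal (n : ℕ) (x y : Fin n → R) : Matrix (Fin n) (Fin n) R := fun i j =>
  if i = j then x i
  else if (i : ℕ) = (j : ℕ) + 1 then y i
  else if (i : ℕ) = 0 ∧ (j : ℕ) = n - 1 then y i
  else 0

theorem det_cyclicBidiagonal (m : ℕ) (x y : Fin (m + 2) → R) :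
    (cyclicBidiagonal (m + 2) x y).det = ∏ i, x i + (-1) ^ (m + 1) * ∏ i, y i := by
  set A := cyclicBidiagonal (m + 2) x y
  have hrow : ∀ j, A 0 j = if j = 0 then x 0 else if j = Fin.last _ then y 0 else 0 := by
    intro j
    simp only [A, cyclicBidiagonal, Fin.ext_iff, Fin.val_zero, Fin.val_last, true_and]
    split_ifs <;> first | rfl | omega | simp_all
  have hlower : (A.submatrix Fin.succ Fin.succ).det = ∏ i : Fin (m + 1), x i.succ := by
    rw [det_of_isLowerTriangular]
    · simp [A, cyclicBidiagonal]
    · intro i j hij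
      rw [OrderDual.toDual_lt_toDual, Fin.lt_def] at hij
      simp only [A, submatrix_apply, cyclicBidiagonal, Fin.ext_iff, Fin.val_succ]
      split_ifs <;> first | rfl | omega | simp_all
  have hupper : (A.submatrix Fin.succ Fin.castSucc).det = ∏ i : Fin (m + 1), y i.succ := by
    rw [det_of_isUpperTriangular]
    · simp [A, cyclicBidiagonal, Fin.ext_iff]
    · intro i j hij
      rw [id, id, Fin.lt_def] at hij
      simp only [A, submatrix_apply, cyclicBidiagonal, Fin.ext_iff, Fin.val_succ, Fin.val_castSucc]
      split_ifs <;> first | rfl | omega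
  rw [det_succ_row_zero, Fintype.sum_eq_add 0 (Fin.last _) (by simp [Fin.ext_iff])]
  · rw [Fin.succAbove_zero, Fin.succAbove_last, hrow, hrow, hlower, hupper,
      Fin.prod_univ_succ x, Fin.prod_univ_succ y]
    simp only [Fin.val_zero, pow_zero, one_mul, ↓reduceIte, Fin.val_last, Fin.last_eq_zero_iff,
      Nat.add_eq_zero_iff, one_ne_zero, and_false]
    ring
  · rintro j ⟨hj0, hjl⟩
    rw [hrow, if_neg hj0, if_neg hjl, mul_zero, zero_mul]

end Matrix

theorem X_smul_charmatrix_sub_mul_eq_cyclicBidiagonal (n : ℕ) (α₁ α₂ α₃ ks kv : ℝ)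
    (e : Fin n → ℝ) :
    (X : ℝ[X]) • charmatrix (M2 n α₂ α₃ - kv • diagonal e)
        - (α₁ • 1 - ks • diagonal e).map Polynomial.C * (M1 n).map Polynomial.C
      = cyclicBidiagonal n (fun i => X ^ 2 + C (α₂ + kv * e i) * X + C (α₁ - ks * e i))
          (fun i => -(C α₃ * X + C (α₁ - ks * e i))) := by
  have hdiag : α₁ • (1 : Matrix (Fin n) (Fin n) ℝ) - ks • diagonal e
      = diagonal fun i => α₁ - ks * e i := by
    rw [smul_one_eq_diagonal, ← diagonal_smul, diagonal_sub]
    rfl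
  rw [hdiag, diagonal_map (map_zero _)]
  refine Matrix.ext fun i j => ?_
  simp only [Matrix.sub_apply, Matrix.smul_apply, charmatrix_apply, diagonal_mul, diagonal_apply,
    map_apply, cyclicBidiagonal, M1, M2, smul_eq_mul]
  split_ifs <;> simp only [map_sub, map_add, map_mul, map_neg, map_one, map_zero] <;> ring

theorem charpoly_Ahat_eq_det_cyclicBidiagonal (n : ℕ) (α₁ α₂ α₃ ks kv : ℝ)
    (S : Finset (Fin n)) :
    (Ahat n α₁ α₂ α₃ ks kv S).charpoly =
      (cyclicBidiagonal n
        (fun i => if i ∈ S then X ^ 2 + C (α₂ + kv) * X + C (α₁ - ks)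
          else X ^ 2 + C α₂ * X + C α₁)
        (fun i => if i ∈ S then -(C α₃ * X + C (α₁ - ks)) else -(C α₃ * X + C α₁))).det := by
  rw [Ahat, charpoly_fromBlocks_zero₁₁, X_smul_charmatrix_sub_mul_eq_cyclicBidiagonal]
  congr <;> funext i <;> split_ifs <;> simp

theorem charpoly_Ahat_depends_only_on_card_general
    (n : ℕ) (α₁ α₂ α₃ ks kv : ℝ) (S S' : Finset (Fin n))
    (hcard : S.card = S'.card) :
    (Ahat n α₁ α₂ α₃ ks kv S).charpoly = (Ahat n α₁ α₂ α₃ ks kv S').charpoly := by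
  rcases Nat.lt_or_ge n 2 with hn | hn
  · rw [Finset.eq_of_card_eq_of_card_le_one (by rw [Fintype.card_fin]; omega) hcard]
  obtain ⟨m, rfl⟩ := Nat.exists_eq_add_of_le' hn
  simp only [charpoly_Ahat_eq_det_cyclicBidiagonal, det_cyclicBidiagonal,
    Fintype.prod_ite_mem_const, hcard]

/-- Stability invariance: the characteristic polynomial of `Â_S` (hence the
spectrum with multiplicity) depends on the AV formation `S` only through its
cardinality `|S|`. -/
theorem charpoly_Ahat_depends_only_on_card
    (n : ℕ) (hn : 2 ≤ n) (α₁ α₂ α₃ ks kv : ℝ) (S S' : Finset (Fin n))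
    (hcard : S.card = S'.card) :
    (Ahat n α₁ α₂ α₃ ks kv S).charpoly = (Ahat n α₁ α₂ α₃ ks kv S').charpoly :=
  charpoly_Ahat_depends_only_on_card_general n α₁ α₂ α₃ ks kv S S' hcard
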